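/- Let f : ℝ^D → ℝ be continuous with |f(x)| ≤ c(1 + ‖x‖²) for all x ∈ ℝ^D and some constant c > 0, and let σ > 0. Define the Gaussian smoothing f̃(μ) = ∫_{ℝ^D} f(x) p(x; μ, σ) dx, where p(·; μ, σ) is the density of N(μ, σ²I_D). Then f̃ is differentiable on ℝ^D and for every μ ∈ ℝ^D its gradient satisfies ∇f̃(μ) = σ^{-2} ∫_{ℝ^D} f(x)(x − μ) p(x; μ, σ) dx; equivalently, for ξ ~ N(μ, σ²I_D), the random vector f(ξ)(ξ − μ)/σ² is integrable with expectation ∇f̃(μ). -/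

import Mathlib

open MeasureTheory
open scoped RealInnerProductSpace
open Nat

lemma aux_pow_le_exp (k : ℕ) {u : ℝ} (hu : 0 ≤ u) : u ^ k ≤ k ! * Real.exp u := by
  have h1 : u ^ k / k ! ≤ Real.exp u := by
    calc u ^ k / k ! ≤ ∑ i ∈ Finset.range (k + 1), u ^ i / i !  := by
          exact Finset.single_le_sum (f := fun i => u ^ i / i !)
            (fun i _ => by positivity) (Finset.self_mem_range_succ k)
      _ ≤ Real.exp u := Real.sum_le_exp_of_nonneg hu _
  have hk : (0:ℝ) < k ! := by positivity
  calc u ^ k = (u ^ k / k !) * k ! := by field_simp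
    _ ≤ Real.exp u * k ! := by gcongr
    _ = k ! * Real.exp u := mul_comm _ _

lemma aux_key_ineq (a b : ℝ) (hb : 0 < b) {t : ℝ} (ht : 0 ≤ t) :
    (1 + t ^ 2) * (1 + t) * Real.exp (a * t - b * t ^ 2)
      ≤ (6 * Real.exp (1 + (a + 1) ^ 2 / (2 * b))) * Real.exp (-(b / 2) * t ^ 2) := by
  have h1 : (1 + t ^ 2) * (1 + t) ≤ 6 * Real.exp (1 + t) := by
    have h2 : (1 + t) ^ 3 ≤ Nat.factorial 3 * Real.exp (1 + t) := aux_pow_le_exp 3 (by linarith)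
    have : (1 + t ^ 2) * (1 + t) ≤ (1 + t) ^ 3 := by nlinarith
    calc (1 + t ^ 2) * (1 + t) ≤ (1 + t) ^ 3 := this
      _ ≤ (Nat.factorial 3 : ℝ) * Real.exp (1 + t) := h2
      _ = 6 * Real.exp (1 + t) := by norm_num [Nat.factorial]
  calc (1 + t ^ 2) * (1 + t) * Real.exp (a * t - b * t ^ 2)
      ≤ 6 * Real.exp (1 + t) * Real.exp (a * t - b * t ^ 2) := by
        exact mul_le_mul_of_nonneg_right h1 (Real.exp_pos _).le
    _ = 6 * Real.exp ((1 + t) + (a * t - b * t ^ 2)) := by rw [mul_assoc, ← Real.exp_add]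
    _ ≤ (6 * Real.exp (1 + (a + 1) ^ 2 / (2 * b))) * Real.exp (-(b / 2) * t ^ 2) := by
        rw [mul_assoc, ← Real.exp_add]
        gcongr 6 * Real.exp ?_
        have hq : (a + 1) * t ≤ (a + 1) ^ 2 / (2 * b) + (b / 2) * t ^ 2 := by
          rw [← sub_nonneg]
          have heq : (a + 1) ^ 2 / (2 * b) + b / 2 * t ^ 2 - (a + 1) * t
              = ((a + 1) - b * t) ^ 2 / (2 * b) := by
            field_simp; ring
          rw [heq]; positivity
        linarith

lemma aux_integrable_exp_sq {D : ℕ} {b : ℝ} (hb : 0 < b) :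
    Integrable (fun x : EuclideanSpace ℝ (Fin D) => Real.exp (-b * ‖x‖ ^ 2)) := by
  have h := (GaussianFourier.integrable_cexp_neg_mul_sq_norm_add
    (V := EuclideanSpace ℝ (Fin D)) (b := (b : ℂ)) (by simpa using hb) 0 0).norm
  refine h.congr (Filter.Eventually.of_forall fun x => ?_)
  simp only [Complex.norm_exp, zero_mul, add_zero,
    ← Complex.ofReal_pow, ← Complex.ofReal_neg, ← Complex.ofReal_mul, Complex.ofReal_re]

lemma aux_integrable_master {D : ℕ} (μ : EuclideanSpace ℝ (Fin D)) (a : ℝ) {b : ℝ} (hb : 0 < b) :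
    Integrable (fun x : EuclideanSpace ℝ (Fin D) =>
      (1 + ‖x - μ‖ ^ 2) * (1 + ‖x - μ‖) * Real.exp (a * ‖x - μ‖ - b * ‖x - μ‖ ^ 2)) := by
  have hcen : Integrable (fun y : EuclideanSpace ℝ (Fin D) =>
      (1 + ‖y‖ ^ 2) * (1 + ‖y‖) * Real.exp (a * ‖y‖ - b * ‖y‖ ^ 2)) := by
    refine Integrable.mono' ((aux_integrable_exp_sq (half_pos hb)).const_mul
      (6 * Real.exp (1 + (a + 1) ^ 2 / (2 * b)))) ?_ ?_
    · apply Continuous.aestronglyMeasurable; fun_prop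
    · filter_upwards with y
      rw [Real.norm_eq_abs, abs_of_nonneg (by positivity)]
      exact aux_key_ineq a b hb (norm_nonneg y)
  have hmp := measurePreserving_sub_right (volume : Measure (EuclideanSpace ℝ (Fin D))) μ
  exact (hmp.integrable_comp_emb (MeasurableEquiv.subRight μ).measurableEmbedding).mpr hcen

/-- The density of the Gaussian distribution `N(μ, σ²I_D)` on `ℝ^D`. -/
noncomputable def gaussDensity {D : ℕ} (μ : EuclideanSpace ℝ (Fin D)) (σ : ℝ)
    (x : EuclideanSpace ℝ (Fin D)) : ℝ :=
  ((Real.sqrt (2 * Real.pi) * σ) ^ D)⁻¹ * Real.exp (-‖x - μ‖ ^ 2 / (2 * σ ^ 2))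

set_option maxHeartbeats 1000000 in
/-- for continuous `f` of at most quadratic growth, the Gaussian smoothing
`f̃(μ) = ∫ f(x) p(x; μ, σ) dx` is differentiable with gradient
`σ⁻² ∫ f(x)(x − μ) p(x; μ, σ) dx`; in particular the one-point estimator
`f(ξ)(ξ − μ)/σ²`, `ξ ~ N(μ, σ²I_D)`, is integrable with expectation `∇f̃(μ)`. -/
theorem stmt_10 (D : ℕ) (f : EuclideanSpace ℝ (Fin D) → ℝ) (hf : Continuous f)
    (c : ℝ) (hc : 0 < c) (hgrowth : ∀ x, |f x| ≤ c * (1 + ‖x‖ ^ 2))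
    (σ : ℝ) (hσ : 0 < σ) :
    (∀ μ : EuclideanSpace ℝ (Fin D),
      Integrable (fun x : EuclideanSpace ℝ (Fin D) =>
        (f x * gaussDensity μ σ x) • (x - μ)) volume) ∧
    (∀ μ : EuclideanSpace ℝ (Fin D),
      HasGradientAt (fun m : EuclideanSpace ℝ (Fin D) => ∫ x, f x * gaussDensity m σ x)
        ((σ ^ 2)⁻¹ • ∫ x, (f x * gaussDensity μ σ x) • (x - μ)) μ) := by
  have hσ2 : (0:ℝ) < σ ^ 2 := by positivity
  set b : ℝ := (2 * σ ^ 2)⁻¹ with hbdef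
  have hb : (0:ℝ) < b := by positivity
  set A : ℝ := ((Real.sqrt (2 * Real.pi) * σ) ^ D)⁻¹ with hAdef
  have hA : (0:ℝ) < A := by
    have h2π : (0:ℝ) < Real.sqrt (2 * Real.pi) := Real.sqrt_pos.mpr (by positivity)
    positivity
  have hgd_eq : ∀ (m x : EuclideanSpace ℝ (Fin D)),
      gaussDensity m σ x = A * Real.exp (-(b * ‖x - m‖ ^ 2)) := by
    intro m x
    unfold gaussDensity
    rw [hAdef, hbdef]
    congr 1
    field_simp
  have hgd_nonneg : ∀ (m x : EuclideanSpace ℝ (Fin D)), 0 ≤ gaussDensity m σ x := by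
    intro m x
    rw [hgd_eq]
    positivity
  have hgd_cont : ∀ m : EuclideanSpace ℝ (Fin D),
      Continuous (fun x : EuclideanSpace ℝ (Fin D) => gaussDensity m σ x) := by
    intro m
    unfold gaussDensity
    fun_prop
  have hgrow2 : ∀ (μ x : EuclideanSpace ℝ (Fin D)),
      |f x| ≤ 2 * c * (1 + 2 * ‖μ‖ ^ 2) * (1 + ‖x - μ‖ ^ 2) := by
    intro μ x
    have hx : ‖x‖ ≤ ‖x - μ‖ + ‖μ‖ := by
      simpa using norm_add_le (x - μ) μ
    have h1 : |f x| ≤ c * (1 + ‖x‖ ^ 2) := hgrowth x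
    have hx2 : ‖x‖ ^ 2 ≤ (‖x - μ‖ + ‖μ‖) ^ 2 := by
      have := norm_nonneg x
      nlinarith
    have h2 : c * (1 + ‖x‖ ^ 2) ≤ 2 * c * (1 + 2 * ‖μ‖ ^ 2) * (1 + ‖x - μ‖ ^ 2) := by
      nlinarith [hx2, sq_nonneg (‖x - μ‖ - ‖μ‖),
        mul_nonneg (mul_nonneg hc.le (sq_nonneg ‖μ‖)) (sq_nonneg ‖x - μ‖), hc]
    linarith
  -- centered master integrable
  have master0 : ∀ μ : EuclideanSpace ℝ (Fin D), Integrable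
      (fun x : EuclideanSpace ℝ (Fin D) =>
        (1 + ‖x - μ‖ ^ 2) * (1 + ‖x - μ‖) * Real.exp (-(b * ‖x - μ‖ ^ 2))) volume := by
    intro μ
    have h := aux_integrable_master μ 0 hb
    simpa using h
  -- Part 1 : integrability of the vector integrand
  have hInt1 : ∀ μ : EuclideanSpace ℝ (Fin D), Integrable
      (fun x : EuclideanSpace ℝ (Fin D) =>
        (f x * gaussDensity μ σ x) • (x - μ)) volume := by
    intro μ
    refine Integrable.mono' ((master0 μ).const_mul (2 * c * (1 + 2 * ‖μ‖ ^ 2) * A)) ?_ ?_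
    · exact ((hf.mul (hgd_cont μ)).smul (continuous_id.sub continuous_const)).aestronglyMeasurable
    · filter_upwards with x
      rw [norm_smul, Real.norm_eq_abs, abs_mul, abs_of_nonneg (hgd_nonneg μ x), hgd_eq]
      have h1 := hgrow2 μ x
      have h3 : ‖x - μ‖ ≤ 1 + ‖x - μ‖ := by linarith [norm_nonneg (x - μ)]
      calc |f x| * (A * Real.exp (-(b * ‖x - μ‖ ^ 2))) * ‖x - μ‖
          ≤ (2 * c * (1 + 2 * ‖μ‖ ^ 2) * (1 + ‖x - μ‖ ^ 2)) *
              (A * Real.exp (-(b * ‖x - μ‖ ^ 2))) * (1 + ‖x - μ‖) := by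
            apply mul_le_mul (mul_le_mul h1 le_rfl (by positivity) (by positivity)) h3
              (norm_nonneg _) (by positivity)
        _ = 2 * c * (1 + 2 * ‖μ‖ ^ 2) * A *
            ((1 + ‖x - μ‖ ^ 2) * (1 + ‖x - μ‖) * Real.exp (-(b * ‖x - μ‖ ^ 2))) := by
            ring
  -- integrability of the scalar integrand
  have hInt0 : ∀ μ : EuclideanSpace ℝ (Fin D), Integrable
      (fun x : EuclideanSpace ℝ (Fin D) => f x * gaussDensity μ σ x) volume := by
    intro μ
    refine Integrable.mono' ((master0 μ).const_mul (2 * c * (1 + 2 * ‖μ‖ ^ 2) * A)) ?_ ?_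
    · exact (hf.mul (hgd_cont μ)).aestronglyMeasurable
    · filter_upwards with x
      rw [Real.norm_eq_abs, abs_mul, abs_of_nonneg (hgd_nonneg μ x), hgd_eq]
      have h1 := hgrow2 μ x
      have h3 : (1:ℝ) ≤ 1 + ‖x - μ‖ := by linarith [norm_nonneg (x - μ)]
      calc |f x| * (A * Real.exp (-(b * ‖x - μ‖ ^ 2)))
          ≤ (2 * c * (1 + 2 * ‖μ‖ ^ 2) * (1 + ‖x - μ‖ ^ 2)) *
              (A * Real.exp (-(b * ‖x - μ‖ ^ 2))) := by
            apply mul_le_mul h1 le_rfl (by positivity) (by positivity)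
        _ ≤ (2 * c * (1 + 2 * ‖μ‖ ^ 2) * (1 + ‖x - μ‖ ^ 2)) *
              (A * Real.exp (-(b * ‖x - μ‖ ^ 2))) * (1 + ‖x - μ‖) :=
            le_mul_of_one_le_right (by positivity) h3
        _ = 2 * c * (1 + 2 * ‖μ‖ ^ 2) * A *
            ((1 + ‖x - μ‖ ^ 2) * (1 + ‖x - μ‖) * Real.exp (-(b * ‖x - μ‖ ^ 2))) := by
            ring
  refine ⟨hInt1, ?_⟩
  intro μ
  set F' : EuclideanSpace ℝ (Fin D) → EuclideanSpace ℝ (Fin D) →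
      (EuclideanSpace ℝ (Fin D) →L[ℝ] ℝ) :=
    fun m x => (f x * gaussDensity m σ x * (σ ^ 2)⁻¹) • innerSL ℝ (x - m) with hF'def
  have h_diff : ∀ x : EuclideanSpace ℝ (Fin D), ∀ m : EuclideanSpace ℝ (Fin D),
      HasFDerivAt (fun m : EuclideanSpace ℝ (Fin D) => f x * gaussDensity m σ x) (F' m x) m := by
    intro x m
    have hsub : HasFDerivAt (fun m : EuclideanSpace ℝ (Fin D) => x - m)
        (-(ContinuousLinearMap.id ℝ (EuclideanSpace ℝ (Fin D)))) m := by
      have hid : HasFDerivAt (fun m : EuclideanSpace ℝ (Fin D) => m)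
          (ContinuousLinearMap.id ℝ (EuclideanSpace ℝ (Fin D))) m := hasFDerivAt_id m
      have h := (hasFDerivAt_const x m).sub hid
      simp only [zero_sub] at h
      exact h
    have hnormsq : HasFDerivAt (fun m : EuclideanSpace ℝ (Fin D) => ‖x - m‖ ^ 2)
        (2 • (innerSL ℝ (x - m)).comp
          (-(ContinuousLinearMap.id ℝ (EuclideanSpace ℝ (Fin D))))) m := hsub.norm_sq
    have hu : HasFDerivAt (fun m : EuclideanSpace ℝ (Fin D) => -(b * ‖x - m‖ ^ 2))
        ((-b) • (2 • (innerSL ℝ (x - m)).comp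
          (-(ContinuousLinearMap.id ℝ (EuclideanSpace ℝ (Fin D)))))) m := by
      have h := hnormsq.const_mul (-b)
      simpa [neg_mul] using h
    have hexp := (Real.hasDerivAt_exp (-(b * ‖x - m‖ ^ 2))).comp_hasFDerivAt m hu
    have hfin := hexp.const_mul (f x * A)
    have heqfun : (fun m : EuclideanSpace ℝ (Fin D) => f x * gaussDensity m σ x)
        = fun m : EuclideanSpace ℝ (Fin D) => f x * A * Real.exp (-(b * ‖x - m‖ ^ 2)) := by
      funext m'; simp only [hgd_eq, mul_assoc]
    have h2b : b * 2 = (σ ^ 2)⁻¹ := by rw [hbdef]; field_simp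
    have hCLM : F' m x = (f x * A) • (Real.exp (-(b * ‖x - m‖ ^ 2)) •
        ((-b) • (2 • (innerSL ℝ (x - m)).comp
          (-(ContinuousLinearMap.id ℝ (EuclideanSpace ℝ (Fin D))))))) := by
      ext v
      simp only [hF'def, ContinuousLinearMap.smul_apply, ContinuousLinearMap.comp_apply,
        ContinuousLinearMap.neg_apply, ContinuousLinearMap.id_apply,
        ContinuousLinearMap.add_apply,
        innerSL_apply_apply (𝕜 := ℝ), smul_eq_mul, two_smul, inner_neg_right]
      rw [hgd_eq, ← h2b]
      ring
    rw [heqfun, hCLM]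
    exact hfin
  have h_bound : ∀ x : EuclideanSpace ℝ (Fin D), ∀ m ∈ Metric.ball μ 1,
      ‖F' m x‖ ≤ 2 * c * (1 + 2 * ‖μ‖ ^ 2) * A * (σ ^ 2)⁻¹ *
        ((1 + ‖x - μ‖ ^ 2) * (1 + ‖x - μ‖) *
          Real.exp ((σ ^ 2)⁻¹ * ‖x - μ‖ - b * ‖x - μ‖ ^ 2)) := by
    intro x m hm
    have hmμ : ‖m - μ‖ < 1 := by
      rw [← dist_eq_norm]; exact Metric.mem_ball.mp hm
    have hmμ' : ‖μ - m‖ < 1 := by rwa [norm_sub_rev]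
    have hs1 : ‖x - m‖ ≤ 1 + ‖x - μ‖ := by
      have hd : x - m = (x - μ) + (μ - m) := by abel
      calc ‖x - m‖ = ‖(x - μ) + (μ - m)‖ := by rw [← hd]
        _ ≤ ‖x - μ‖ + ‖μ - m‖ := norm_add_le _ _
        _ ≤ 1 + ‖x - μ‖ := by linarith
    have hs2 : ‖x - μ‖ ^ 2 - 2 * ‖x - μ‖ ≤ ‖x - m‖ ^ 2 := by
      have h1 : ‖x - μ‖ ≤ ‖x - m‖ + 1 := by
        have hd : x - μ = (x - m) + (m - μ) := by abel
        calc ‖x - μ‖ = ‖(x - m) + (m - μ)‖ := by rw [← hd]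
          _ ≤ ‖x - m‖ + ‖m - μ‖ := norm_add_le _ _
          _ ≤ ‖x - m‖ + 1 := by linarith
      rcases le_or_gt 1 ‖x - μ‖ with h | h
      · nlinarith [norm_nonneg (x - m)]
      · nlinarith [norm_nonneg (x - m), norm_nonneg (x - μ)]
    have hgdle : gaussDensity m σ x
        ≤ A * Real.exp ((σ ^ 2)⁻¹ * ‖x - μ‖ - b * ‖x - μ‖ ^ 2) := by
      rw [hgd_eq]
      have h2b : b * (2 * ‖x - μ‖) = (σ ^ 2)⁻¹ * ‖x - μ‖ := by
        rw [hbdef]; field_simp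
      have h3 : b * (‖x - μ‖ ^ 2 - ‖x - m‖ ^ 2) ≤ b * (2 * ‖x - μ‖) :=
        mul_le_mul_of_nonneg_left (by linarith [hs2]) hb.le
      gcongr
      nlinarith [h2b, h3]
    have hnorm : ‖F' m x‖ = |f x| * gaussDensity m σ x * (σ ^ 2)⁻¹ * ‖x - m‖ := by
      simp only [hF'def]
      rw [norm_smul (f x * gaussDensity m σ x * (σ ^ 2)⁻¹) ((innerSL ℝ) (x - m)),
        innerSL_apply_norm, Real.norm_eq_abs, abs_mul, abs_mul,
        abs_of_nonneg (hgd_nonneg m x), abs_of_nonneg (by positivity : (0:ℝ) ≤ (σ ^ 2)⁻¹)]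
    rw [hnorm]
    have h1 := hgrow2 μ x
    calc |f x| * gaussDensity m σ x * (σ ^ 2)⁻¹ * ‖x - m‖
        ≤ (2 * c * (1 + 2 * ‖μ‖ ^ 2) * (1 + ‖x - μ‖ ^ 2)) *
            (A * Real.exp ((σ ^ 2)⁻¹ * ‖x - μ‖ - b * ‖x - μ‖ ^ 2)) * (σ ^ 2)⁻¹ *
            (1 + ‖x - μ‖) := by
          apply mul_le_mul _ hs1 (norm_nonneg _) (by positivity)
          apply mul_le_mul _ le_rfl (by positivity) (by positivity)
          exact mul_le_mul h1 hgdle (hgd_nonneg m x) (by positivity)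
      _ = 2 * c * (1 + 2 * ‖μ‖ ^ 2) * A * (σ ^ 2)⁻¹ *
            ((1 + ‖x - μ‖ ^ 2) * (1 + ‖x - μ‖) *
              Real.exp ((σ ^ 2)⁻¹ * ‖x - μ‖ - b * ‖x - μ‖ ^ 2)) := by ring
  have key : HasFDerivAt
      (fun m : EuclideanSpace ℝ (Fin D) => ∫ x, f x * gaussDensity m σ x)
      (∫ x, F' μ x) μ := by
    apply hasFDerivAt_integral_of_dominated_of_fderiv_le (s := Metric.ball μ 1) (Metric.ball_mem_nhds μ one_pos)
      (bound := fun x => 2 * c * (1 + 2 * ‖μ‖ ^ 2) * A * (σ ^ 2)⁻¹ *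
        ((1 + ‖x - μ‖ ^ 2) * (1 + ‖x - μ‖) *
          Real.exp ((σ ^ 2)⁻¹ * ‖x - μ‖ - b * ‖x - μ‖ ^ 2)))
    · exact Filter.Eventually.of_forall fun m => (hf.mul (hgd_cont m)).aestronglyMeasurable
    · exact hInt0 μ
    · apply Continuous.aestronglyMeasurable
      simp only [hF'def]
      exact ((hf.mul (hgd_cont μ)).mul continuous_const).smul
        ((innerSL ℝ (E := EuclideanSpace ℝ (Fin D))).continuous.comp
          (continuous_id.sub continuous_const))
    · exact Filter.Eventually.of_forall fun x => h_bound x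
    · exact (aux_integrable_master μ ((σ ^ 2)⁻¹) hb).const_mul _
    · exact Filter.Eventually.of_forall fun x m _ => h_diff x m
  rw [hasGradientAt_iff_hasFDerivAt]
  refine key.congr_fderiv (Eq.symm ?_)
  have hInt2 : Integrable (fun x : EuclideanSpace ℝ (Fin D) =>
      (σ ^ 2)⁻¹ • ((f x * gaussDensity μ σ x) • (x - μ))) volume :=
    (hInt1 μ).smul ((σ ^ 2)⁻¹ : ℝ)
  have hF'eq : ∀ x : EuclideanSpace ℝ (Fin D), F' μ x
      = innerSL ℝ ((σ ^ 2)⁻¹ • ((f x * gaussDensity μ σ x) • (x - μ))) := by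
    intro x
    simp only [hF'def]
    rw [_root_.map_smul, _root_.map_smul, smul_smul]
    congr 1
    ring
  calc (InnerProductSpace.toDual ℝ (EuclideanSpace ℝ (Fin D)))
        ((σ ^ 2)⁻¹ • ∫ x, (f x * gaussDensity μ σ x) • (x - μ))
      = innerSL ℝ ((σ ^ 2)⁻¹ • ∫ x, (f x * gaussDensity μ σ x) • (x - μ)) := by
        ext v; simp [InnerProductSpace.toDual_apply_apply]
    _ = innerSL ℝ (∫ x, (σ ^ 2)⁻¹ • ((f x * gaussDensity μ σ x) • (x - μ))) := by
        rw [integral_smul]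
    _ = ∫ x, innerSL ℝ ((σ ^ 2)⁻¹ • ((f x * gaussDensity μ σ x) • (x - μ))) := by
        rw [ContinuousLinearMap.integral_comp_comm _ hInt2]
    _ = ∫ x, F' μ x := by simp_rw [hF'eq]
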